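/- Let D₁, ..., Dₘ be n×n diagonal matrices with positive diagonal entries such that D₁D₂⋯Dₘ = I. Then for every n×n complex matrix A, ‖A‖^m ≤ ‖D₁A‖·‖D₂A‖ ⋯ ‖DₘA‖, where ‖·‖ denotes the spectral (operator) norm on ℂⁿ with the Euclidean norm. -/

import Mathlib

/-!
Write `y = A x`. Since `∏ᵢ |cᵢⱼ| = 1`, each `|yⱼ|²` is the geometric mean of the numbers
`cᵢⱼ² |yⱼ|²` over `i`, so the generalized Hölder inequality (weighted AM-GM applied to the
normalized rows, then summed over `j`) gives `‖y‖^m ≤ ∏ᵢ ‖Dᵢ y‖`. Bounding each `‖Dᵢ A x‖` by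
`‖Dᵢ A‖ ‖x‖` and taking the supremum over unit vectors `x` yields the operator norm inequality.
-/

open scoped Matrix

/-- The spectral (operator) norm of an `n × n` complex matrix acting on `ℂⁿ` with
the Euclidean norm. -/
noncomputable def matOpNorm {n : ℕ} (M : Matrix (Fin n) (Fin n) ℂ) : ℝ :=
  ‖Matrix.toEuclideanCLM (𝕜 := ℂ) M‖

open Finset

theorem Real.sum_prod_rpow_le_prod_sum_rpow {ι κ : Type*} (s : Finset ι) (t : Finset κ)
    (f : ι → κ → ℝ) (hf : ∀ i ∈ s, ∀ j ∈ t, 0 ≤ f i j) (w : ι → ℝ) (hw : ∀ i ∈ s, 0 ≤ w i)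
    (hw₁ : ∑ i ∈ s, w i = 1) :
    ∑ j ∈ t, ∏ i ∈ s, f i j ^ w i ≤ ∏ i ∈ s, (∑ j ∈ t, f i j) ^ w i := by
  set S := fun i => ∑ j ∈ t, f i j
  have hS : ∀ i ∈ s, 0 ≤ S i := fun i hi => sum_nonneg (hf i hi)
  -- `f i j = S i * (f i j / S i)` also when `S i = 0`, since then `f i j = 0`.
  have hfS : ∀ i ∈ s, ∀ j ∈ t, f i j = S i * (f i j / S i) := fun i hi j hj => by
    rcases (hS i hi).eq_or_lt with h0 | hpos
    · rw [(sum_eq_zero_iff_of_nonneg (hf i hi)).mp h0.symm j hj, zero_div, mul_zero]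
    · rw [mul_div_cancel₀ _ hpos.ne']
  calc ∑ j ∈ t, ∏ i ∈ s, f i j ^ w i
      = ∑ j ∈ t, (∏ i ∈ s, S i ^ w i) * ∏ i ∈ s, (f i j / S i) ^ w i := by
        refine sum_congr rfl fun j hj => ?_
        rw [← prod_mul_distrib]
        refine prod_congr rfl fun i hi => ?_
        rw [← Real.mul_rpow (hS i hi) (div_nonneg (hf i hi j hj) (hS i hi)), ← hfS i hi j hj]
    _ ≤ ∑ j ∈ t, (∏ i ∈ s, S i ^ w i) * ∑ i ∈ s, w i * (f i j / S i) := by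
        gcongr with j hj
        · exact prod_nonneg fun i hi => Real.rpow_nonneg (hS i hi) _
        · exact Real.geom_mean_le_arith_mean_weighted s w _ hw hw₁
            fun i hi => div_nonneg (hf i hi j hj) (hS i hi)
    _ = (∏ i ∈ s, S i ^ w i) * ∑ i ∈ s, w i * (S i / S i) := by
        simp only [← mul_sum, sum_comm (s := t), sum_div, S]
    _ ≤ (∏ i ∈ s, S i ^ w i) * ∑ i ∈ s, w i := by
        gcongr with i hi
        · exact prod_nonneg fun i hi => Real.rpow_nonneg (hS i hi) _
        · exact mul_le_of_le_one_right (hw i hi) (div_self_le_one _)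
    _ = ∏ i ∈ s, S i ^ w i := by rw [hw₁, mul_one]

theorem Matrix.norm_toEuclideanCLM_diagonal_apply_sq {𝕜 κ : Type*} [RCLike 𝕜] [Fintype κ]
    [DecidableEq κ] (d : κ → 𝕜) (y : EuclideanSpace 𝕜 κ) :
    ‖Matrix.toEuclideanCLM (𝕜 := 𝕜) (Matrix.diagonal d) y‖ ^ 2 = ∑ j, ‖d j‖ ^ 2 * ‖y j‖ ^ 2 := by
  simp [EuclideanSpace.norm_sq_eq, Matrix.mulVec_diagonal, mul_pow]

theorem Matrix.norm_pow_card_le_prod_norm_toEuclideanCLM_diagonal {𝕜 ι κ : Type*} [RCLike 𝕜]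
    [Fintype ι] [Fintype κ] [DecidableEq κ] (d : ι → κ → 𝕜) (hd : ∀ j, ∏ i, ‖d i j‖ = 1)
    (y : EuclideanSpace 𝕜 κ) :
    ‖y‖ ^ Fintype.card ι ≤ ∏ i, ‖Matrix.toEuclideanCLM (𝕜 := 𝕜) (Matrix.diagonal (d i)) y‖ := by
  set k := Fintype.card ι
  obtain hk | hk := eq_or_ne k 0
  · simp [hk, Fintype.card_eq_zero_iff.mp hk]
  set Dy := fun i => Matrix.toEuclideanCLM (𝕜 := 𝕜) (Matrix.diagonal (d i)) y
  have hgeom : ∀ j, ∏ i, (‖d i j‖ ^ 2 * ‖y j‖ ^ 2) ^ (k : ℝ)⁻¹ = ‖y j‖ ^ 2 := fun j => by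
    rw [Real.finsetProd_rpow _ _ (fun i _ => by positivity), prod_mul_distrib, prod_pow, hd,
      one_pow, one_mul, prod_const, card_univ, Real.pow_rpow_inv_natCast (by positivity) hk]
  have hholder : ‖y‖ ^ 2 ≤ ∏ i, (‖Dy i‖ ^ 2) ^ (k : ℝ)⁻¹ := by
    have := Real.sum_prod_rpow_le_prod_sum_rpow univ univ (fun i j => ‖d i j‖ ^ 2 * ‖y j‖ ^ 2)
      (fun _ _ _ _ => by positivity) (fun _ => (k : ℝ)⁻¹) (fun _ _ => by positivity)
      (by simp [k, hk])
    simp only [hgeom, ← Matrix.norm_toEuclideanCLM_diagonal_apply_sq] at this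
    rwa [EuclideanSpace.norm_sq_eq y]
  have hsq : (‖y‖ ^ k) ^ 2 ≤ (∏ i, ‖Dy i‖) ^ 2 := calc
    (‖y‖ ^ k) ^ 2 = (‖y‖ ^ 2) ^ k := by ring
    _ ≤ (∏ i, (‖Dy i‖ ^ 2) ^ (k : ℝ)⁻¹) ^ k := by gcongr
    _ = (∏ i, ‖Dy i‖) ^ 2 := by
      rw [← prod_pow, ← prod_pow]
      exact prod_congr rfl fun i _ => Real.rpow_inv_natCast_pow (by positivity) hk
  exact (pow_le_pow_iff_left₀ (by positivity) (by positivity) two_ne_zero).mp hsq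

theorem ContinuousLinearMap.opNorm_pow_card_le_prod_opNorm {𝕜 ι E F G : Type*}
    [NontriviallyNormedField 𝕜] [Fintype ι] [SeminormedAddCommGroup E] [SeminormedAddCommGroup F]
    [SeminormedAddCommGroup G] [NormedSpace 𝕜 E] [NormedSpace 𝕜 F] [NormedSpace 𝕜 G]
    (T : E →L[𝕜] F) (S : ι → E →L[𝕜] G)
    (h : ∀ x, ‖T x‖ ^ Fintype.card ι ≤ ∏ i, ‖S i x‖) :
    ‖T‖ ^ Fintype.card ι ≤ ∏ i, ‖S i‖ := by
  set k := Fintype.card ι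
  obtain hk | hk := eq_or_ne k 0
  · simp [hk, Fintype.card_eq_zero_iff.mp hk]
  set P := ∏ i, ‖S i‖
  have hP : 0 ≤ P := prod_nonneg fun i _ => norm_nonneg _
  suffices ‖T‖ ≤ P ^ (k : ℝ)⁻¹ by
    simpa [Real.rpow_inv_natCast_pow hP hk] using pow_le_pow_left₀ (norm_nonneg _) this k
  refine T.opNorm_le_bound (by positivity) fun x => ?_
  refine (pow_le_pow_iff_left₀ (norm_nonneg _) (by positivity) hk).mp ?_
  calc ‖T x‖ ^ k ≤ ∏ i, ‖S i x‖ := h x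
    _ ≤ ∏ i, ‖S i‖ * ‖x‖ := prod_le_prod (fun _ _ => norm_nonneg _) fun i _ => (S i).le_opNorm x
    _ = (P ^ (k : ℝ)⁻¹ * ‖x‖) ^ k := by
      rw [prod_mul_distrib, prod_const, card_univ, mul_pow, Real.rpow_inv_natCast_pow hP hk]

theorem matOpNorm_pow_le_prod_general (n m : ℕ) (c : Fin m → Fin n → ℝ)
    (hprod : ∀ j, ∏ i, c i j = 1)
    (A : Matrix (Fin n) (Fin n) ℂ) :
    matOpNorm A ^ m ≤ ∏ i, matOpNorm (Matrix.diagonal (fun j => (c i j : ℂ)) * A) := by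
  have hd : ∀ j, ∏ i, ‖(c i j : ℂ)‖ = 1 := fun j => by
    simp only [Complex.norm_real, Real.norm_eq_abs, ← abs_prod, hprod, abs_one]
  have key := (Matrix.toEuclideanCLM (𝕜 := ℂ) A).opNorm_pow_card_le_prod_opNorm
    (fun i => Matrix.toEuclideanCLM (𝕜 := ℂ) (Matrix.diagonal fun j => (c i j : ℂ)) *
      Matrix.toEuclideanCLM (𝕜 := ℂ) A)
    fun x => Matrix.norm_pow_card_le_prod_norm_toEuclideanCLM_diagonal _ hd _
  rw [Fintype.card_fin] at key
  simpa only [matOpNorm, map_mul] using key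

/-- Finite-dimensional operator norm analogue of Cohen's inequality: if
`D₁, …, Dₘ` are diagonal matrices with positive diagonal entries and
`D₁D₂⋯Dₘ = I`, then `‖A‖^m ≤ ‖D₁A‖ ⋯ ‖DₘA‖`. -/
theorem matOpNorm_pow_le_prod (n m : ℕ) (c : Fin m → Fin n → ℝ)
    (hc : ∀ i j, 0 < c i j) (hprod : ∀ j, ∏ i, c i j = 1)
    (A : Matrix (Fin n) (Fin n) ℂ) :
    matOpNorm A ^ m ≤ ∏ i, matOpNorm (Matrix.diagonal (fun j => (c i j : ℂ)) * A) :=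
  matOpNorm_pow_le_prod_general n m c hprod A
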